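/- arXiv:1107.4145 — 2 statements merged into one kernel-verified Lean document; each statement's English description precedes it below -/
import Mathlib

section
/- The curve germ t ↦ (t³, t⁵ − t⁷, 0) in ℝ³ is RL-equivalent to the curve germ t ↦ (t³, t⁵, 0). -/
open Filter

/-- RL-equivalence of analytic curve germs `(ℝ,0) → (ℝⁿ,0)`:
there are an analytic germ `Φ : (ℝⁿ,0) → (ℝⁿ,0)` with invertible differential at `0`
and an analytic reparametrization `τ : (ℝ,0) → (ℝ,0)` with `τ'(0) ≠ 0`
such that `σ = Φ ∘ γ ∘ τ` near `0`. -/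
def RLEquiv {n : ℕ} (γ σ : ℝ → (Fin n → ℝ)) : Prop :=
  ∃ (Φ : (Fin n → ℝ) → (Fin n → ℝ)) (τ : ℝ → ℝ),
    AnalyticAt ℝ Φ 0 ∧ Φ 0 = 0 ∧ Function.Bijective (fderiv ℝ Φ 0) ∧
    AnalyticAt ℝ τ 0 ∧ τ 0 = 0 ∧ deriv τ 0 ≠ 0 ∧
    ∀ᶠ t in nhds (0 : ℝ), σ t = Φ (γ (τ t))

/-- The order of a function germ at `0`: the smallest `i` such that the `i`-th
Taylor coefficient (equivalently, the `i`-th derivative) at `0` is nonzero. -/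
noncomputable def ord (f : ℝ → ℝ) : ℕ := sInf {i : ℕ | iteratedDeriv i f 0 ≠ 0}

/-- The semigroup of a curve germ: all orders `ord (P ∘ γ)` where `P` ranges over
analytic germs `(ℝⁿ,0) → (ℝ,0)` with `P ∘ γ` not identically zero near `0`. -/
def curveSemigroup {n : ℕ} (γ : ℝ → (Fin n → ℝ)) : Set ℕ :=
  {k | ∃ P : (Fin n → ℝ) → ℝ, AnalyticAt ℝ P 0 ∧ P 0 = 0 ∧
      (¬ ∀ᶠ t in nhds (0 : ℝ), P (γ t) = 0) ∧ ord (fun t => P (γ t)) = k}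

/-- The multiplicity of a curve germ: the minimum of the orders of its
not-identically-zero coordinate functions. -/
noncomputable def multC {n : ℕ} (γ : ℝ → (Fin n → ℝ)) : ℕ :=
  sInf {k | ∃ i : Fin n, (¬ ∀ᶠ t in nhds (0 : ℝ), γ t i = 0) ∧ ord (fun t => γ t i) = k}

/-!
Along `τ t = t + t³/5 - t⁵/25` the curve `γ = (t³, t⁵ - t⁷, 0)` becomes
`γ (τ t) = (t³ + 3/5 t⁵ + ⋯, t⁵ - 6/5 t⁹ + ⋯, 0)`, in which the exponent `7`, a gap of the
semigroup `⟨3, 5⟩`, no longer occurs: `τ` is the unique `t + a t³ + b t⁵` killing both `t⁷`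
coefficients. Writing every remaining power `t ^ (3a + 5b)` as `x ^ a * y ^ b` gives a polynomial
map `Ψ`, tangent at `0` to the shear `(x, y, z) ↦ (x + 3/5 y, y, z)`, with `γ ∘ τ = Ψ ∘ σ` for
`σ = (t³, t⁵, 0)`. By the analytic inverse function theorem `Φ = Ψ⁻¹` is an analytic germ, and
`σ = Φ ∘ γ ∘ τ`.
-/

open scoped Topology

section

variable {𝕜 E F : Type*} [NontriviallyNormedField 𝕜] [NormedAddCommGroup E] [NormedSpace 𝕜 E]
  [NormedAddCommGroup F] [NormedSpace 𝕜 F]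

@[fun_prop]
theorem analyticAt_apply {ι : Type*} [Fintype ι] (i : ι) (a : ι → F) :
    AnalyticAt 𝕜 (fun f : ι → F => f i) a :=
  (ContinuousLinearMap.proj (R := 𝕜) (φ := fun _ : ι => F) i).analyticAt a

@[fun_prop]
theorem AnalyticAt.vecCons {n : ℕ} {f : E → F} {g : E → Fin n → F} {a : E}
    (hf : AnalyticAt 𝕜 f a) (hg : AnalyticAt 𝕜 g a) :
    AnalyticAt 𝕜 (fun x => Matrix.vecCons (f x) (g x)) a := by
  refine AnalyticAt.pi fun i => ?_
  cases i using Fin.cases with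
  | zero => simpa using hf
  | succ i => simpa using analyticAt_pi_iff.1 hg i

theorem HasStrictFDerivAt.smul_of_eq_zero {c : E → 𝕜} {g : E → F} {c' : E →L[𝕜] 𝕜}
    {g' : E →L[𝕜] F} {a : E} (hc : HasStrictFDerivAt c c' a) (hg : HasStrictFDerivAt g g' a)
    (hca : c a = 0) (hga : g a = 0) :
    HasStrictFDerivAt (fun x => c x • g x) (0 : E →L[𝕜] F) a := by
  simpa [hca, hga] using hc.fun_smul hg

theorem HasStrictFDerivAt.analyticAt_localInverse [CompleteSpace E] {f : E → F}
    {f' : E ≃L[𝕜] F} {a : E} (hf : HasStrictFDerivAt f (f' : E →L[𝕜] F) a)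
    (hfa : AnalyticAt 𝕜 f a) : AnalyticAt 𝕜 (hf.localInverse f f' a) (f a) :=
  (hf.toOpenPartialHomeomorph f).analyticAt_symm' hf.mem_toOpenPartialHomeomorph_source hfa
    hf.hasFDerivAt.fderiv

end

theorem RLEquiv.of_comp_eq {n : ℕ} {γ σ : ℝ → Fin n → ℝ} {Ψ : (Fin n → ℝ) → Fin n → ℝ}
    {e : (Fin n → ℝ) ≃L[ℝ] (Fin n → ℝ)} {τ : ℝ → ℝ} (hΨ : AnalyticAt ℝ Ψ 0)
    (hΨ' : HasStrictFDerivAt Ψ (e : (Fin n → ℝ) →L[ℝ] (Fin n → ℝ)) 0) (hΨ0 : Ψ 0 = 0)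
    (hτ : AnalyticAt ℝ τ 0) (hτ0 : τ 0 = 0) (hτ' : deriv τ 0 ≠ 0)
    (hσ : Tendsto σ (𝓝 0) (𝓝 0)) (h : ∀ᶠ t in 𝓝 0, γ (τ t) = Ψ (σ t)) : RLEquiv γ σ := by
  have hΦ := hΨ'.analyticAt_localInverse hΨ
  have hΦ0 := hΨ'.localInverse_apply_image
  have hΦ' := hΨ'.to_localInverse
  rw [hΨ0] at hΦ hΦ0 hΦ'
  refine ⟨hΨ'.localInverse Ψ e 0, τ, hΦ, hΦ0, ?_, hτ, hτ0, hτ', ?_⟩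
  · rw [hΦ'.hasFDerivAt.fderiv]
    exact e.symm.bijective
  · filter_upwards [h, hσ.eventually hΨ'.eventually_left_inverse] with t ht hinv
    rw [ht, hinv]

noncomputable section

def reparam (t : ℝ) : ℝ := t + t ^ 3 / 5 - t ^ 5 / 25

theorem analyticAt_reparam : AnalyticAt ℝ reparam 0 := by
  unfold reparam; fun_prop

theorem hasDerivAt_reparam : HasDerivAt reparam 1 0 := by
  unfold reparam
  simpa using ((hasDerivAt_id' (0 : ℝ)).fun_add ((hasDerivAt_pow 3 0).div_const 5)).fun_sub
    ((hasDerivAt_pow 5 0).div_const 25)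

def shear : (Fin 3 → ℝ) ≃L[ℝ] (Fin 3 → ℝ) := LinearEquiv.toContinuousLinearEquiv
  { toFun := fun v => ![v 0 + 3 / 5 * v 1, v 1, v 2]
    invFun := fun v => ![v 0 - 3 / 5 * v 1, v 1, v 2]
    map_add' := fun u v => by ext i; fin_cases i <;> simp; ring
    map_smul' := fun c v => by ext i; fin_cases i <;> simp; ring
    left_inv := fun v => by ext i; fin_cases i <;> simp
    right_inv := fun v => by ext i; fin_cases i <;> simp }

def nonlinCoeffX (x y : ℝ) : Fin 3 → ℝ :=
  ![-x ^ 2 / 25 + 3 / 3125 * y ^ 2,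
    -6 / 5 * x ^ 2 - 16 / 25 * x * y + 4 / 125 * y ^ 2 + 17 / 3125 * x ^ 3 * y
      - 79 / 15625 * x ^ 2 * y ^ 2 - 6 / 15625 * x * y ^ 3 + 78 / 390625 * y ^ 4
      - 49 / 9765625 * x ^ 3 * y ^ 3 + 7 / 48828125 * x ^ 2 * y ^ 4
      + 14 / 244140625 * x * y ^ 5 - 7 / 1220703125 * y ^ 6,
    0]

def nonlinCoeffY (y : ℝ) : Fin 3 → ℝ :=
  ![-y ^ 2 / 15625, 256 / 3125 * y ^ 2 + 69 / 9765625 * y ^ 4 + 1 / 6103515625 * y ^ 6, 0]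

/-- The map `Ψ` of the proof idea, split as its linear part plus `x • (⋯) + y • (⋯)` with both
coefficient vectors vanishing at `0`, so that the nonlinear part visibly has derivative `0`. -/
def coordChange (v : Fin 3 → ℝ) : Fin 3 → ℝ :=
  shear v + v 0 • nonlinCoeffX (v 0) (v 1) + v 1 • nonlinCoeffY (v 1)

theorem analyticAt_nonlinCoeffX :
    AnalyticAt ℝ (fun v : Fin 3 → ℝ => nonlinCoeffX (v 0) (v 1)) 0 := by
  unfold nonlinCoeffX; fun_prop

theorem analyticAt_nonlinCoeffY : AnalyticAt ℝ (fun v : Fin 3 → ℝ => nonlinCoeffY (v 1)) 0 := by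
  unfold nonlinCoeffY; fun_prop

theorem analyticAt_coordChange : AnalyticAt ℝ coordChange 0 :=
  (((shear : (Fin 3 → ℝ) →L[ℝ] (Fin 3 → ℝ)).analyticAt 0).add
    ((analyticAt_apply 0 0).smul analyticAt_nonlinCoeffX)).add
    ((analyticAt_apply 1 0).smul analyticAt_nonlinCoeffY)

theorem coordChange_zero : coordChange 0 = 0 := by
  simp [coordChange]

theorem hasStrictFDerivAt_coordChange :
    HasStrictFDerivAt coordChange (shear : (Fin 3 → ℝ) →L[ℝ] (Fin 3 → ℝ)) 0 := by
  have hX := (hasStrictFDerivAt_apply 0 0).smul_of_eq_zero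
    analyticAt_nonlinCoeffX.hasStrictFDerivAt rfl (by simp [nonlinCoeffX])
  have hY := (hasStrictFDerivAt_apply 1 0).smul_of_eq_zero
    analyticAt_nonlinCoeffY.hasStrictFDerivAt rfl (by simp [nonlinCoeffY])
  have h := ((shear : (Fin 3 → ℝ) →L[ℝ] (Fin 3 → ℝ)).hasStrictFDerivAt.add hX).add hY
  rw [add_zero, add_zero] at h
  exact h

theorem reparam_curve_eq_coordChange (t : ℝ) :
    ![reparam t ^ 3, reparam t ^ 5 - reparam t ^ 7, 0] = coordChange ![t ^ 3, t ^ 5, 0] := by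
  ext i
  fin_cases i <;> simp [coordChange, shear, nonlinCoeffX, nonlinCoeffY, reparam] <;> ring

end

/-- The curve `(t³, t⁵ − t⁷, 0)` is RL-equivalent to `(t³, t⁵, 0)`. -/
theorem RLEquiv_t3_t5_minus_t7 :
    RLEquiv (fun t : ℝ => ![t ^ 3, t ^ 5 - t ^ 7, 0])
      (fun t : ℝ => ![t ^ 3, t ^ 5, 0]) := by
  have hσ : ContinuousAt (fun t : ℝ => ![t ^ 3, t ^ 5, 0]) 0 := by fun_prop
  refine .of_comp_eq analyticAt_coordChange hasStrictFDerivAt_coordChange coordChange_zero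
    analyticAt_reparam (by simp [reparam]) (by simp [hasDerivAt_reparam.deriv]) ?_
    (.of_forall reparam_curve_eq_coordChange)
  convert hσ.tendsto
  ext i; fin_cases i <;> simp
end

section
/- The curve germs (t³, t⁴, t⁵) and (t³, t⁴, 0) in ℝ³ are not RL-equivalent. (These are the two inequivalent normal forms for the class RVT at level three of the Monster tower.) -/
open Filter

/-! If `σ = Φ ∘ γ ∘ τ` with `γ = (t³, t⁴, t⁵)` and `σ = (t³, t⁴, 0)`, then, `τ` being a local
homeomorphism, the third component `P = Φ₂` of `Φ` vanishes along `γ`. Since `P` is analytic,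
`P y = dP₀ y + O(‖y‖²)`, and `‖γ s‖² = O(s⁶)`; so `dP₀ (γ s) = a s³ + b s⁴ + c s⁵` is `O(s⁶)`,
which forces `a = b = c = 0`, i.e. `dP₀ = 0`. But `dP₀` is the third row of the invertible
differential `DΦ(0)`. -/

open Asymptotics Topology

section
variable {𝕜 F : Type*} [NontriviallyNormedField 𝕜] [NormedAddCommGroup F] [NormedSpace 𝕜 F]

theorem isBigO_pow_pow_of_le {m n : ℕ} (h : m ≤ n) :
    (fun x : 𝕜 => x ^ n) =O[𝓝 0] fun x => x ^ m := by
  obtain h | rfl := h.lt_or_eq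
  · exact (isLittleO_pow_pow h).isBigO
  · exact isBigO_refl _ _

theorem isBigO_pow_smul_const (k : ℕ) (v : F) :
    (fun x : 𝕜 => x ^ k • v) =O[𝓝 0] fun x => x ^ k :=
  isBigO_of_le' _ fun _ => (norm_smul _ _).trans_le (mul_comm _ _).le

theorem eq_zero_of_pow_smul_isBigO {m : ℕ} {v : F}
    (h : (fun x : 𝕜 => x ^ m • v) =O[𝓝 0] fun x => x ^ (m + 1)) : v = 0 := by
  by_contra hv
  have h_small : (fun x : 𝕜 => x ^ m • v) =o[𝓝 0] fun x => x ^ m :=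
    h.trans_isLittleO (isLittleO_pow_pow m.lt_succ_self)
  have h_large : (fun x : 𝕜 => x ^ m) =O[𝓝 0] fun x => x ^ m • v :=
    isBigO_of_le' (c := ‖v‖⁻¹) _ fun x => by
      rw [norm_smul, mul_comm ‖v‖⁻¹, mul_assoc, mul_inv_cancel₀ (norm_ne_zero_iff.2 hv), mul_one]
  have h_ne : ∀ᶠ x in 𝓝[≠] (0 : 𝕜), ‖x ^ m • v‖ ≠ 0 :=
    eventually_nhdsWithin_of_forall fun x (hx : x ≠ 0) => by simp [hx, hv]
  exact isLittleO_irrefl' (h_ne.frequently.filter_mono nhdsWithin_le_nhds) (h_small.trans_isBigO h_large)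

theorem eq_zero_of_sum_pow_smul_isBigO {m n : ℕ} {c : Fin n → F}
    (h : (fun x : 𝕜 => ∑ i : Fin n, x ^ (m + (i : ℕ)) • c i) =O[𝓝 0] fun x => x ^ (m + n)) :
    c = 0 := by
  induction n generalizing m with
  | zero => exact Subsingleton.elim _ _
  | succ n ih =>
    set tail : 𝕜 → F := fun x => ∑ i : Fin n, x ^ (m + 1 + (i : ℕ)) • c i.succ
    have h_split : (fun x : 𝕜 => ∑ i : Fin (n + 1), x ^ (m + (i : ℕ)) • c i) =
        fun x => x ^ m • c 0 + tail x := by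
      funext x
      simp only [Fin.sum_univ_succ, Fin.val_zero, Fin.val_succ, add_zero, tail, ← add_assoc,
        add_right_comm m 1]
    have h_tail : tail =O[𝓝 0] fun x => x ^ (m + 1) :=
      IsBigO.fun_sum fun i _ => (isBigO_pow_smul_const _ _).trans (isBigO_pow_pow_of_le (by omega))
    rw [h_split] at h
    have h_head : c 0 = 0 := by
      refine eq_zero_of_pow_smul_isBigO (𝕜 := 𝕜) (m := m) ?_
      simpa using (h.trans (isBigO_pow_pow_of_le (by omega))).sub h_tail
    have h_succ : (fun i : Fin n => c i.succ) = 0 := by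
      refine ih (m := m + 1) ?_
      simpa [h_head, tail, add_assoc, add_comm 1] using h
    ext i
    exact Fin.cases h_head (fun j => congrFun h_succ j) i

variable {E : Type*} [NormedAddCommGroup E] [NormedSpace 𝕜 E]

theorem AnalyticAt.isBigO_sub_sub_fderiv {f : E → F} {x : E} (hf : AnalyticAt 𝕜 f x) :
    (fun y => f (x + y) - f x - fderiv 𝕜 f x y) =O[𝓝 0] fun y => ‖y‖ ^ 2 := by
  obtain ⟨p, hp⟩ := hf
  have h_partialSum : ∀ y, p.partialSum 2 y = f x + fderiv 𝕜 f x y := by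
    intro y
    simp only [FormalMultilinearSeries.partialSum, Finset.sum_range_succ, Finset.range_one,
      Finset.sum_singleton, hp.coeff_zero, hp.fderiv_eq, continuousMultilinearCurryFin1_apply,
      Matrix.zero_empty, Matrix.Fin.snoc_vecEmpty, Matrix.vec_single_eq_const]
  simpa only [h_partialSum, sub_sub] using hp.isBigO_sub_partialSum_pow 2

def monomialCurve (m n : ℕ) (s : 𝕜) : Fin n → 𝕜 := fun i => s ^ (m + (i : ℕ))

theorem monomialCurve_isBigO (m n : ℕ) : monomialCurve m n =O[𝓝 (0 : 𝕜)] fun s => s ^ m :=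
  isBigO_pi.2 fun _ => isBigO_pow_pow_of_le (Nat.le_add_right _ _)

theorem monomialCurve_zero {m : ℕ} (hm : m ≠ 0) (n : ℕ) : monomialCurve m n (0 : 𝕜) = 0 := by
  funext i
  simp [monomialCurve, hm]

theorem ContinuousLinearMap.apply_eq_sum_smul_single {ι : Type*} [Fintype ι] [DecidableEq ι]
    (L : (ι → 𝕜) →L[𝕜] F) (v : ι → 𝕜) : L v = ∑ i, v i • L (Pi.single i 1) := by
  conv_lhs => rw [pi_eq_sum_univ' v]
  simp only [map_sum, map_smul]

theorem fderiv_eq_zero_of_eventually_comp_monomialCurve_eq_zero {m n : ℕ} (hnm : n ≤ m)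
    {P : (Fin n → 𝕜) → F} (hP : AnalyticAt 𝕜 P 0)
    (h : ∀ᶠ s in 𝓝 0, P (monomialCurve m n s) = 0) : fderiv 𝕜 P 0 = 0 := by
  obtain rfl | hm := eq_or_ne m 0
  · obtain rfl := Nat.le_zero.1 hnm
    exact ContinuousLinearMap.ext fun v => by rw [Subsingleton.elim v 0, map_zero]; rfl
  have hP0 : P 0 = 0 := by simpa [monomialCurve_zero hm] using h.self_of_nhds
  have hγ : Tendsto (monomialCurve m n) (𝓝 0) (𝓝 (0 : Fin n → 𝕜)) :=
    (continuous_pi fun i => continuous_pow _).tendsto' 0 0 (monomialCurve_zero hm n)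
  have h_sq : (fun s => ‖monomialCurve m n s‖ ^ 2) =O[𝓝 (0 : 𝕜)] fun s => s ^ (m + n) := by
    have h_norm := (monomialCurve_isBigO (𝕜 := 𝕜) m n).norm_left.pow 2
    refine h_norm.trans ?_
    simpa only [← pow_mul] using isBigO_pow_pow_of_le (𝕜 := 𝕜) (by omega : m + n ≤ m * 2)
  have hLγ : (fun s : 𝕜 => ∑ i : Fin n, s ^ (m + (i : ℕ)) • fderiv 𝕜 P 0 (Pi.single i 1))
      =O[𝓝 0] fun s => s ^ (m + n) := by
    refine ((hP.isBigO_sub_sub_fderiv.comp_tendsto hγ).trans h_sq).neg_left.congr' ?_ .rfl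
    filter_upwards [h] with s hs
    simp only [Function.comp_apply, zero_add, hs, hP0, sub_zero, zero_sub, neg_neg]
    exact (fderiv 𝕜 P 0).apply_eq_sum_smul_single _
  have hc := eq_zero_of_sum_pow_smul_isBigO hLγ
  ext1 v
  rw [ContinuousLinearMap.apply_eq_sum_smul_single]
  simp [congrFun hc]
end

/-- The curves `(t³, t⁴, t⁵)` and `(t³, t⁴, 0)` are not RL-equivalent. -/
theorem not_RLEquiv_t3_t4_t5_and_t3_t4_0 :
    ¬ RLEquiv (fun t : ℝ => ![t ^ 3, t ^ 4, t ^ 5])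
      (fun t : ℝ => ![t ^ 3, t ^ 4, 0]) := by
  rintro ⟨Φ, τ, hΦ, -, hΦ_bij, hτ, hτ0, hτ', h_eq⟩
  have hτ_map : map τ (𝓝 0) = 𝓝 0 := by
    simpa only [hτ0] using hτ.hasStrictDerivAt.map_nhds_eq hτ'
  have h_curve : ∀ t : ℝ, ![t ^ 3, t ^ 4, t ^ 5] = monomialCurve 3 3 t := fun t => by
    funext i; fin_cases i <;> rfl
  have h_third : ∀ᶠ s in 𝓝 0, Φ (monomialCurve 3 3 s) 2 = 0 := by
    rw [← hτ_map, eventually_map]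
    filter_upwards [h_eq] with t ht
    simpa [h_curve] using (congrFun ht 2).symm
  have hΦ_third : AnalyticAt ℝ (fun x => Φ x 2) 0 :=
    (ContinuousLinearMap.proj (R := ℝ) (φ := fun _ : Fin 3 => ℝ) 2).analyticAt _ |>.comp hΦ
  have h_deriv := fderiv_eq_zero_of_eventually_comp_monomialCurve_eq_zero le_rfl hΦ_third h_third
  rw [fderiv_apply hΦ.differentiableAt] at h_deriv
  obtain ⟨v, hv⟩ := hΦ_bij.2 (Pi.single 2 1)
  simpa [hv] using congrArg (· v) h_deriv
end
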